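/- arXiv:0903.4043 — 3 statements merged into one kernel-verified Lean document; each statement's English description precedes it below -/
import Mathlib

section
/- Let s ≥ 0 be an integer and let μ_0 < ν_0, μ_1 < ν_1, ..., μ_s < ν_s be real numbers. Then there exists a real linear recurrence sequence (a_n)_{n≥0} (i.e., a sequence satisfying a_{n+h} = η_1 a_{n+h-1} + ... + η_h a_n for all n ≥ 0, for some integer h ≥ 1 and real numbers η_1, ..., η_h) such that the closure of its value set {a_n : n ≥ 0} equals the union ⋃_{k=0}^{s} [μ_k, ν_k]. -/
open Real Set

/-- Multiples of a small positive step, shifted by multiples of a period, approximate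
any real number. -/
private lemma aux_fill {T δ : ℝ} (hT : 0 < T) (hδ : 0 < δ) (x : ℝ) :
    ∃ (j : ℕ) (m : ℤ), |x - ((j : ℝ) * δ + (m : ℝ) * T)| < δ := by
  set m : ℤ := ⌊x / T⌋ with hm
  have hr0 : 0 ≤ x - (m : ℝ) * T := by
    have h1 : (m : ℝ) ≤ x / T := Int.floor_le _
    have := (mul_le_mul_iff_of_pos_right hT).2 h1
    rw [div_mul_cancel₀ _ hT.ne'] at this
    linarith
  set r : ℝ := x - (m : ℝ) * T with hrdef
  have hfl : (0 : ℤ) ≤ ⌊r / δ⌋ := Int.floor_nonneg.2 (div_nonneg hr0 hδ.le)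
  refine ⟨⌊r / δ⌋.toNat, m, ?_⟩
  have hjr : ((⌊r / δ⌋.toNat : ℕ) : ℝ) = (⌊r / δ⌋ : ℝ) := by
    exact_mod_cast congrArg (Int.cast : ℤ → ℝ) (Int.toNat_of_nonneg hfl)
  have h1 : ((⌊r / δ⌋ : ℝ)) ≤ r / δ := Int.floor_le _
  have h2 : r / δ < (⌊r / δ⌋ : ℝ) + 1 := Int.lt_floor_add_one _
  have h1' : (⌊r / δ⌋ : ℝ) * δ ≤ r := by
    have := (mul_le_mul_iff_of_pos_right hδ).2 h1
    rwa [div_mul_cancel₀ _ hδ.ne'] at this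
  have h2' : r < ((⌊r / δ⌋ : ℝ) + 1) * δ := by
    have := (mul_lt_mul_iff_of_pos_right hδ).2 h2
    rwa [div_mul_cancel₀ _ hδ.ne'] at this
  rw [hjr, abs_lt]
  constructor <;> nlinarith

private lemma aux_step {ψ g : ℝ} (k : ℕ) (c : ℤ) (hk : (k : ℝ) * ψ = g + (c : ℝ) * (2 * π))
    (hg : g ≠ 0) (x : ℝ) :
    ∃ (n : ℕ) (m : ℤ), |x - ((n : ℝ) * ψ + (m : ℝ) * (2 * π))| < |g| := by
  have hT : (0 : ℝ) < 2 * π := by positivity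
  rcases hg.lt_or_gt with h | h
  · obtain ⟨j, m, hjm⟩ := aux_fill hT (neg_pos.2 h) (-x)
    refine ⟨j * k, -m - j * c, ?_⟩
    have key : ((j * k : ℕ) : ℝ) * ψ + ((-m - j * c : ℤ) : ℝ) * (2 * π) =
        -((j : ℝ) * (-g) + (m : ℝ) * (2 * π)) := by
      push_cast
      linear_combination (j : ℝ) * hk
    rw [key, abs_of_neg h]
    have e : x - -((j : ℝ) * (-g) + (m : ℝ) * (2 * π)) =
        -((-x) - ((j : ℝ) * (-g) + (m : ℝ) * (2 * π))) := by ring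
    rw [e, abs_neg]
    exact hjm
  · obtain ⟨j, m, hjm⟩ := aux_fill hT h x
    refine ⟨j * k, m - j * c, ?_⟩
    have key : ((j * k : ℕ) : ℝ) * ψ + ((m - j * c : ℤ) : ℝ) * (2 * π) =
        (j : ℝ) * g + (m : ℝ) * (2 * π) := by
      push_cast
      linear_combination (j : ℝ) * hk
    rw [key, abs_of_pos h]
    exact hjm

/-- The forward orbit of an irrational rotation (read in `ℝ`, up to multiples of `2π`,
shifted by `β`) is dense. -/
private lemma aux_dense (ψ β : ℝ) (hirr : Irrational (ψ / (2 * π))) :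
    Dense {x : ℝ | ∃ (n : ℕ) (m : ℤ), x = β + (n : ℝ) * ψ + (m : ℝ) * (2 * π)} := by
  have hT : (0 : ℝ) < 2 * π := by positivity
  -- the subgroup generated by ψ and 2π is dense
  have hS : Dense ((AddSubgroup.closure {ψ, 2 * π} : AddSubgroup ℝ) : Set ℝ) := by
    rcases (AddSubgroup.closure {ψ, 2 * π} : AddSubgroup ℝ).dense_or_cyclic with hd | ⟨a, ha⟩
    · exact hd
    · exfalso
      have hψ : ψ ∈ AddSubgroup.closure ({ψ, 2 * π} : Set ℝ) :=
        AddSubgroup.subset_closure (by simp)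
      have h2π : 2 * π ∈ AddSubgroup.closure ({ψ, 2 * π} : Set ℝ) :=
        AddSubgroup.subset_closure (by simp)
      rw [ha, AddSubgroup.mem_closure_singleton] at hψ h2π
      obtain ⟨p, hp⟩ := hψ
      obtain ⟨q, hq⟩ := h2π
      have hp' : (p : ℝ) * a = ψ := by simpa [zsmul_eq_mul] using hp
      have hq' : (q : ℝ) * a = 2 * π := by simpa [zsmul_eq_mul] using hq
      have hq0 : (q : ℝ) ≠ 0 := by
        rintro h0
        rw [h0, zero_mul] at hq'
        exact hT.ne hq'
      have ha0 : a ≠ 0 := by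
        rintro rfl
        rw [mul_zero] at hq'
        exact hT.ne hq'
      have : ψ / (2 * π) = ((p / q : ℚ) : ℝ) := by
        rw [← hp', ← hq']
        push_cast
        field_simp
      exact hirr ⟨p / q, this.symm⟩
  rw [Metric.dense_iff]
  intro x ε hε
  set ε₀ : ℝ := min ε (2 * π) with hε₀def
  have hε₀ : 0 < ε₀ := lt_min hε hT
  obtain ⟨g, hgS, hg0, hgε⟩ := hS.exists_between hε₀
  obtain ⟨p, q, hpq⟩ := AddSubgroup.mem_closure_pair.1 hgS
  have hpq' : (p : ℝ) * ψ + (q : ℝ) * (2 * π) = g := by simpa [zsmul_eq_mul] using hpq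
  have hp0 : p ≠ 0 := by
    rintro rfl
    rw [Int.cast_zero, zero_mul, zero_add] at hpq'
    have hq1 : (1 : ℝ) ≤ (q : ℝ) := by
      have : (0 : ℝ) < (q : ℝ) := by
        by_contra hle
        push_neg at hle
        nlinarith
      exact_mod_cast this
    have : 2 * π ≤ g := by nlinarith
    have : g < 2 * π := lt_of_lt_of_le hgε (min_le_right _ _)
    linarith
  have hgne : g ≠ 0 := hg0.ne'
  have key : ∃ (n : ℕ) (m : ℤ), |(x - β) - ((n : ℝ) * ψ + (m : ℝ) * (2 * π))| < g := by
    rcases hp0.lt_or_gt with hneg | hpos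
    · -- p < 0 : (-p) • ψ = -g + q * 2π
      have hk : (((-p).toNat : ℕ) : ℝ) * ψ = (-g) + (q : ℝ) * (2 * π) := by
        have : (((-p).toNat : ℕ) : ℝ) = ((-p : ℤ) : ℝ) := by
          exact_mod_cast congrArg (Int.cast : ℤ → ℝ) (Int.toNat_of_nonneg (by omega))
        rw [this]
        push_cast
        linarith [hpq']
      obtain ⟨n, m, hnm⟩ := aux_step _ q hk (by simpa using hgne) (x - β)
      exact ⟨n, m, by rwa [abs_neg, abs_of_pos hg0] at hnm⟩
    · have hk : ((p.toNat : ℕ) : ℝ) * ψ = g + ((-q : ℤ) : ℝ) * (2 * π) := by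
        have : ((p.toNat : ℕ) : ℝ) = ((p : ℤ) : ℝ) := by
          exact_mod_cast congrArg (Int.cast : ℤ → ℝ) (Int.toNat_of_nonneg (by omega))
        rw [this]
        push_cast
        linarith [hpq']
      obtain ⟨n, m, hnm⟩ := aux_step _ (-q) hk hgne (x - β)
      exact ⟨n, m, by rwa [abs_of_pos hg0] at hnm⟩
  obtain ⟨n, m, hnm⟩ := key
  refine ⟨β + (n : ℝ) * ψ + (m : ℝ) * (2 * π), Metric.mem_ball.2 ?_, ⟨n, m, rfl⟩⟩
  rw [Real.dist_eq]
  have e : β + (n : ℝ) * ψ + (m : ℝ) * (2 * π) - x =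
      -((x - β) - ((n : ℝ) * ψ + (m : ℝ) * (2 * π))) := by ring
  rw [e, abs_neg]
  calc |(x - β) - ((n : ℝ) * ψ + (m : ℝ) * (2 * π))| < g := hnm
    _ < ε₀ := hgε
    _ ≤ ε := min_le_left _ _

private lemma aux_icc_subset (c r β ψ : ℝ) (hr : 0 < r)
    (hψ : Dense {x : ℝ | ∃ (n : ℕ) (m : ℤ), x = β + (n : ℝ) * ψ + (m : ℝ) * (2 * π)})
    (A : Set ℝ) (hA : ∀ n : ℕ, c + r * Real.cos (β + (n : ℝ) * ψ) ∈ A) :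
    Icc (c - r) (c + r) ⊆ closure A := by
  intro y hy
  have h1 : -1 ≤ (y - c) / r := by
    rw [le_div_iff₀ hr]
    linarith [hy.1]
  have h2 : (y - c) / r ≤ 1 := by
    rw [div_le_one hr]
    linarith [hy.2]
  have ht : Real.cos (Real.arccos ((y - c) / r)) = (y - c) / r := Real.cos_arccos h1 h2
  set t := Real.arccos ((y - c) / r) with htdef
  have hyt : y = c + r * Real.cos t := by
    rw [ht]
    field_simp
    ring
  set f : ℝ → ℝ := fun x => c + r * Real.cos x with hf
  have hfc : Continuous f := by
    exact continuous_const.add (continuous_const.mul Real.continuous_cos)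
  have htD : t ∈ closure {x : ℝ | ∃ (n : ℕ) (m : ℤ),
      x = β + (n : ℝ) * ψ + (m : ℝ) * (2 * π)} := hψ t
  have himg : f t ∈ closure (f '' {x : ℝ | ∃ (n : ℕ) (m : ℤ),
      x = β + (n : ℝ) * ψ + (m : ℝ) * (2 * π)}) :=
    image_closure_subset_closure_image hfc ⟨t, htD, rfl⟩
  have hsub : f '' {x : ℝ | ∃ (n : ℕ) (m : ℤ),
      x = β + (n : ℝ) * ψ + (m : ℝ) * (2 * π)} ⊆ A := by
    rintro _ ⟨u, ⟨n, m, rfl⟩, rfl⟩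
    show c + r * Real.cos (β + (n : ℝ) * ψ + (m : ℝ) * (2 * π)) ∈ A
    rw [Real.cos_add_int_mul_two_pi]
    exact hA n
  rw [hyt]
  exact closure_mono hsub himg

private lemma aux_trig (x ψ : ℝ) :
    Real.cos (x + 3 * ψ) = (2 * Real.cos ψ + 1) * Real.cos (x + 2 * ψ)
      - (2 * Real.cos ψ + 1) * Real.cos (x + ψ) + Real.cos x := by
  have h1 := Real.cos_add_cos (x + 3 * ψ) (x + ψ)
  have h2 := Real.cos_add_cos (x + 2 * ψ) x
  have e1 : (x + 3 * ψ + (x + ψ)) / 2 = x + 2 * ψ := by ring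
  have e1' : (x + 3 * ψ - (x + ψ)) / 2 = ψ := by ring
  have e2 : (x + 2 * ψ + x) / 2 = x + ψ := by ring
  have e2' : (x + 2 * ψ - x) / 2 = ψ := by ring
  rw [e1, e1'] at h1
  rw [e2, e2'] at h2
  linarith

/-- Any finite non-empty collection of (nondegenerate) closed intervals is the closure of
the value set of some real linear recurrence sequence. -/
theorem stmt_1 (s : ℕ) (μ ν : Fin (s + 1) → ℝ) (hμν : ∀ k, μ k < ν k) :
    ∃ a : ℕ → ℝ,
      (∃ (h : ℕ) (η : Fin h → ℝ), 1 ≤ h ∧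
        ∀ n : ℕ, a (n + h) = ∑ i : Fin h, η i * a (n + h - 1 - i.val)) ∧
      closure (Set.range a) = ⋃ k : Fin (s + 1), Set.Icc (μ k) (ν k) := by
  have hT : (0 : ℝ) < 2 * π := by positivity
  have hs1 : ((s : ℝ) + 1) ≠ 0 := by positivity
  set ψ : ℝ := 2 * π * Real.sqrt 2 with hψdef
  set θ : ℝ := ψ / ((s : ℝ) + 1) with hθdef
  have hMθ : ((s : ℝ) + 1) * θ = ψ := by
    rw [hθdef]
    field_simp
  have hirr : Irrational (ψ / (2 * π)) := by
    have : ψ / (2 * π) = Real.sqrt 2 := by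
      rw [hψdef]
      field_simp
    rw [this]
    exact irrational_sqrt_two
  set c : Fin (s + 1) → ℝ := fun k => (μ k + ν k) / 2 with hc
  set r : Fin (s + 1) → ℝ := fun k => (ν k - μ k) / 2 with hrdef
  have hr : ∀ k, 0 < r k := fun k => by
    simp only [hrdef]
    linarith [hμν k]
  set idx : ℕ → Fin (s + 1) := fun n => ⟨n % (s + 1), Nat.mod_lt _ s.succ_pos⟩ with hidxdef
  set a : ℕ → ℝ := fun n => c (idx n) + r (idx n) * Real.cos ((n : ℝ) * θ) with ha
  set A0 : ℝ := 2 * Real.cos ψ + 1 with hA0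
  set i1 : Fin (3 * (s + 1)) := ⟨s, by omega⟩ with hi1
  set i2 : Fin (3 * (s + 1)) := ⟨2 * s + 1, by omega⟩ with hi2
  set i3 : Fin (3 * (s + 1)) := ⟨3 * s + 2, by omega⟩ with hi3
  set η : Fin (3 * (s + 1)) → ℝ := fun i =>
    (if i = i1 then A0 else 0) + (if i = i2 then -A0 else 0) + (if i = i3 then 1 else 0)
    with hη
  refine ⟨a, ⟨3 * (s + 1), η, by omega, ?_⟩, ?_⟩
  · intro n
    have hsum : ∑ i : Fin (3 * (s + 1)), η i * a (n + 3 * (s + 1) - 1 - i.val) =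
        A0 * a (n + 3 * (s + 1) - 1 - i1.val)
          + (-A0) * a (n + 3 * (s + 1) - 1 - i2.val)
          + 1 * a (n + 3 * (s + 1) - 1 - i3.val) := by
      simp only [hη, add_mul, Finset.sum_add_distrib, ite_mul, zero_mul,
        Finset.sum_ite_eq', Finset.mem_univ, if_true]
    rw [hsum]
    have e1 : n + 3 * (s + 1) - 1 - i1.val = n + 2 * (s + 1) := by
      simp only [hi1]; omega
    have e2 : n + 3 * (s + 1) - 1 - i2.val = n + (s + 1) := by
      simp only [hi2]; omega
    have e3 : n + 3 * (s + 1) - 1 - i3.val = n := by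
      simp only [hi3]; omega
    rw [e1, e2, e3]
    have hidx2 : idx (n + 2 * (s + 1)) = idx n := by
      apply Fin.ext
      simp [hidxdef, Nat.add_mul_mod_self_right]
    have hidx1 : idx (n + (s + 1)) = idx n := by
      apply Fin.ext
      have : n + (s + 1) = n + 1 * (s + 1) := by ring
      simp [hidxdef, this, Nat.add_mul_mod_self_right]
    have hidx3 : idx (n + 3 * (s + 1)) = idx n := by
      apply Fin.ext
      simp [hidxdef, Nat.add_mul_mod_self_right]
    have h3 : ((n + 3 * (s + 1) : ℕ) : ℝ) * θ = (n : ℝ) * θ + 3 * ψ := by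
      push_cast
      linear_combination (3 : ℝ) * hMθ
    have h2 : ((n + 2 * (s + 1) : ℕ) : ℝ) * θ = (n : ℝ) * θ + 2 * ψ := by
      push_cast
      linear_combination (2 : ℝ) * hMθ
    have h1 : ((n + (s + 1) : ℕ) : ℝ) * θ = (n : ℝ) * θ + ψ := by
      push_cast
      linear_combination hMθ
    simp only [ha, hidx1, hidx2, hidx3, h3, h2, h1, hA0]
    linear_combination (r (idx n)) * aux_trig ((n : ℝ) * θ) ψ
  · refine Set.Subset.antisymm (closure_minimal ?_
      (isClosed_iUnion_of_finite fun k => isClosed_Icc)) (Set.iUnion_subset fun k => ?_)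
    · rintro _ ⟨n, rfl⟩
      refine Set.mem_iUnion.2 ⟨idx n, ?_, ?_⟩
      · have hb := Real.neg_one_le_cos ((n : ℝ) * θ)
        have hrk := (hr (idx n)).le
        have : 0 ≤ r (idx n) * (Real.cos ((n : ℝ) * θ) + 1) :=
          mul_nonneg hrk (by linarith)
        simp only [ha, hc, hrdef] at *
        nlinarith
      · have hb := Real.cos_le_one ((n : ℝ) * θ)
        have hrk := (hr (idx n)).le
        have : 0 ≤ r (idx n) * (1 - Real.cos ((n : ℝ) * θ)) :=
          mul_nonneg hrk (by linarith)
        simp only [ha, hc, hrdef] at *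
        nlinarith
    · have hIcc : Set.Icc (μ k) (ν k) = Set.Icc (c k - r k) (c k + r k) := by
        simp only [hc, hrdef]
        congr 1 <;> ring
      rw [hIcc]
      refine aux_icc_subset (c k) (r k) ((k.val : ℝ) * θ) ψ (hr k)
        (aux_dense ψ _ hirr) (Set.range a) ?_
      intro n
      refine ⟨n * (s + 1) + k.val, ?_⟩
      have hidxk : idx (n * (s + 1) + k.val) = k := by
        apply Fin.ext
        have e : n * (s + 1) + k.val = k.val + n * (s + 1) := Nat.add_comm _ _
        simp [hidxdef, e, Nat.add_mul_mod_self_right, Nat.mod_eq_of_lt k.isLt]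
      have hargk : ((n * (s + 1) + k.val : ℕ) : ℝ) * θ = (k.val : ℝ) * θ + (n : ℝ) * ψ := by
        push_cast
        linear_combination (n : ℝ) * hMθ
      simp only [ha, hidxk, hargk]
end

section
/- Let m, r ≥ 1 be integers, let τ_1, ..., τ_m be real numbers such that 1, τ_1, ..., τ_m are linearly independent over ℚ, let c_{ij} (1 ≤ i ≤ r, 1 ≤ j ≤ m) be integers, and let ξ_1, ..., ξ_r and φ_1, ..., φ_r be real numbers. Define the sequence v_n = Σ_{i=1}^{r} ξ_i cos(2π n Σ_{j=1}^{m} c_{ij} τ_j + φ_i) for n ≥ 0, and the function F : [0,1]^m → ℝ by F(t_1, ..., t_m) = Σ_{i=1}^{r} ξ_i cos(2π Σ_{j=1}^{m} c_{ij} t_j + φ_i). Then the closure of the value set {v_n : n ≥ 0} equals the image F([0,1]^m). -/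
open Real

open Complex Finset

noncomputable def ee (x : ℝ) : ℂ := Complex.exp (2 * Real.pi * Complex.I * x)

lemma ee_add (x y : ℝ) : ee (x + y) = ee x * ee y := by
  rw [ee, ee, ee, ← Complex.exp_add]; push_cast; ring_nf

lemma ee_zero : ee 0 = 1 := by simp [ee]

noncomputable def Complex.abs : AbsoluteValue ℂ ℝ := NormedField.toAbsoluteValue ℂ

lemma Complex.norm_eq_abs (z : ℂ) : ‖z‖ = Complex.abs z := rfl

lemma Complex.abs_exp (z : ℂ) : Complex.abs (Complex.exp z) = Real.exp z.re := Complex.norm_exp z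

lemma Complex.abs_ofReal (x : ℝ) : Complex.abs (x : ℂ) = |x| := Complex.norm_real x

lemma Complex.abs_natCast (n : ℕ) : Complex.abs (n : ℂ) = n := Complex.norm_natCast n

lemma ee_abs (x : ℝ) : Complex.abs (ee x) = 1 := by
  rw [ee, Complex.abs_exp]
  have : (2 * (Real.pi:ℂ) * Complex.I * x).re = 0 := by simp
  rw [this, Real.exp_zero]

lemma ee_int (p : ℤ) : ee p = 1 := by
  rw [ee]
  have := Complex.exp_int_mul_two_pi_mul_I p
  rw [← this]; congr 1; push_cast; ring

lemma ee_eq_one_iff {x : ℝ} : ee x = 1 ↔ ∃ p : ℤ, x = p := by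
  rw [ee, Complex.exp_eq_one_iff]
  constructor
  · rintro ⟨n, hn⟩
    refine ⟨n, ?_⟩
    have h2 : (2 * Real.pi * Complex.I : ℂ) ≠ 0 := by
      simp [Real.pi_ne_zero, Complex.I_ne_zero]
    have : (2 * Real.pi * Complex.I : ℂ) * x = (2 * Real.pi * Complex.I) * n := by
      rw [hn]; ring
    have := mul_left_cancel₀ h2 this
    exact_mod_cast this
  · rintro ⟨p, rfl⟩
    exact ⟨p, by push_cast; ring⟩

lemma ee_pow (x : ℝ) (a : ℕ) : (ee x) ^ a = ee (a * x) := by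
  rw [ee, ee, ← Complex.exp_nat_mul]; push_cast; ring_nf

lemma ee_sum {ι : Type*} (s : Finset ι) (f : ι → ℝ) : ee (∑ i ∈ s, f i) = ∏ i ∈ s, ee (f i) := by
  simp only [ee]
  rw [← Complex.exp_sum]
  congr 1
  push_cast
  rw [Finset.mul_sum]

lemma one_add_ee (s : ℝ) : 1 + ee s = ee (s/2) * (2 * Real.cos (Real.pi * s)) := by
  have h1 : ee (s/2) * ee (-(s/2)) = 1 := by rw [← ee_add]; simp [ee_zero]
  have h2 : ee (s/2) * ee (s/2) = ee s := by rw [← ee_add]; ring_nf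
  have hc : (ee (-(s/2)) + ee (s/2)) = 2 * Real.cos (Real.pi * s) := by
    rw [ee, ee]
    have e1 : (2 * (Real.pi:ℂ) * Complex.I * (-(s/2):ℝ)) = (-(Real.pi * s) : ℝ) * Complex.I := by
      push_cast; ring
    have e2 : (2 * (Real.pi:ℂ) * Complex.I * ((s/2):ℝ)) = ((Real.pi * s : ℝ)) * Complex.I := by
      push_cast; ring
    rw [e1, e2, Complex.exp_mul_I, Complex.exp_mul_I]
    push_cast
    rw [Complex.cos_neg, Complex.sin_neg]
    ring
  calc 1 + ee s = ee (s/2) * (ee (-(s/2)) + ee (s/2)) := by rw [mul_add, h1, h2]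
  _ = ee (s/2) * (2 * Real.cos (Real.pi * s)) := by rw [hc]

lemma abs_one_add_ee (s : ℝ) : Complex.abs (1 + ee s) = 2 * |Real.cos (Real.pi * s)| := by
  rw [one_add_ee, map_mul, ee_abs, one_mul]
  rw [show ((2:ℂ) * (Real.cos (Real.pi*s):ℝ)) = ((2 * Real.cos (Real.pi*s) : ℝ) : ℂ) by push_cast; ring]
  rw [Complex.abs_ofReal, abs_mul]
  simp

lemma abs_one_add_ee_le (s : ℝ) : Complex.abs (1 + ee s) ≤ 2 := by
  rw [abs_one_add_ee]
  nlinarith [abs_cos_le_one (Real.pi * s)]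

lemma expand_pow (k m : ℕ) (s : Fin m → ℝ) :
    (∏ j, (1 + ee (s j))) ^ k
      = ∑ a ∈ Fintype.piFinset (fun _ : Fin m => Finset.range (k+1)),
          (∏ j, (Nat.choose k (a j) : ℂ)) * ee (∑ j, (a j : ℝ) * s j) := by
  rw [← Finset.prod_pow]
  have h1 : ∀ j, (1 + ee (s j)) ^ k
      = ∑ i ∈ Finset.range (k+1), (ee (s j)) ^ i * (Nat.choose k i : ℂ) := by
    intro j
    rw [add_comm, add_pow]
    simp
  simp_rw [h1]
  rw [Finset.prod_univ_sum]
  apply Finset.sum_congr rfl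
  intro a _
  rw [Finset.prod_mul_distrib, mul_comm]
  congr 1
  rw [ee_sum]
  apply Finset.prod_congr rfl
  intro j _
  rw [ee_pow]

lemma cabs_sub_le (x y : ℂ) : Complex.abs (x - y) ≤ Complex.abs x + Complex.abs y := by
  simpa [← Complex.norm_eq_abs] using norm_sub_le x y

lemma key_ineq (m : ℕ) (τ t : Fin m → ℝ)
    (hInd : ∀ d : Fin m → ℤ, (∃ p : ℤ, ∑ j, (d j : ℝ) * τ j = (p : ℝ)) → ∀ j, d j = 0)
    (B : ℝ) (hB : 0 ≤ B)
    (hψ : ∀ n : ℕ, Complex.abs (∏ j, (1 + ee ((n : ℝ) * τ j - t j))) ≤ B)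
    (k : ℕ) :
    ((Nat.choose k (k/2) : ℝ)) ^ m ≤ B ^ k := by
  classical
  set P := Fintype.piFinset (fun _ : Fin m => Finset.range (k+1)) with hP
  set θ : (Fin m → ℕ) → ℝ := fun a => ∑ j, (a j : ℝ) * τ j with hθ
  set T : (Fin m → ℕ) → ℝ := fun a => ∑ j, (a j : ℝ) * t j with hT
  set W : (Fin m → ℕ) → ℕ := fun a => ∏ j, Nat.choose k (a j) with hW
  set astar : Fin m → ℕ := fun _ => k/2 with hastar
  have hastarP : astar ∈ P := by
    simp only [hP, hastar, Fintype.mem_piFinset, Finset.mem_range]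
    intro j; omega
  set ψ : ℕ → ℂ := fun n => ∏ j, (1 + ee ((n : ℝ) * τ j - t j)) with hψdef
  -- expansion
  have hexp : ∀ n : ℕ, ψ n ^ k * ee (-((n : ℝ) * θ astar))
      = ∑ a ∈ P, ((W a : ℂ) * ee (-(T a))) * (ee (θ a - θ astar)) ^ n := by
    intro n
    rw [hψdef]
    rw [expand_pow k m (fun j => (n : ℝ) * τ j - t j)]
    rw [Finset.sum_mul]
    apply Finset.sum_congr rfl
    intro a _
    have harg : (∑ j, (a j : ℝ) * ((n : ℝ) * τ j - t j)) = (n : ℝ) * θ a - T a := by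
      rw [hθ, hT]
      simp only [Finset.mul_sum, ← Finset.sum_sub_distrib]
      apply Finset.sum_congr rfl
      intro j _
      ring
    rw [harg, ee_pow]
    rw [show (W a : ℂ) = (∏ j, (Nat.choose k (a j) : ℂ)) by rw [hW]; push_cast; rfl]
    have hee : ee ((n : ℝ) * θ a - T a) * ee (-((n : ℝ) * θ astar))
        = ee (-(T a)) * ee ((n : ℝ) * (θ a - θ astar)) := by
      rw [← ee_add, ← ee_add]
      congr 1
      ring
    rw [mul_assoc, hee, ← mul_assoc]
  -- nonvanishing of z a for a ≠ astar
  have hz : ∀ a ∈ P, a ≠ astar → ee (θ a - θ astar) ≠ 1 := by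
    intro a _ hne h1
    obtain ⟨p, hp⟩ := ee_eq_one_iff.mp h1
    set d : Fin m → ℤ := fun j => (a j : ℤ) - ((k/2 : ℕ) : ℤ) with hdd
    have hd : ∑ j, ((d j : ℤ) : ℝ) * τ j = (p : ℝ) := by
      rw [← hp]
      simp only [hθ, hastar, hdd]
      rw [← Finset.sum_sub_distrib]
      apply Finset.sum_congr rfl
      intro j _
      simp only [Int.cast_sub, Int.cast_natCast]
      ring
    have hall := hInd d ⟨p, hd⟩
    apply hne
    funext j
    have hj : (a j : ℤ) - ((k/2 : ℕ) : ℤ) = 0 := hall j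
    show a j = k/2
    omega
  -- error bound
  set E : ℝ := ∑ a ∈ P.erase astar, (W a : ℝ) * (2 / Complex.abs (ee (θ a - θ astar) - 1)) with hE
  have main : ∀ N : ℕ, (N : ℝ) * (W astar : ℝ) ≤ (N : ℝ) * B ^ k + E := by
    intro N
    set S : ℂ := ∑ n ∈ Finset.range N, ψ n ^ k * ee (-((n : ℝ) * θ astar)) with hS
    have hS2 : S = ∑ a ∈ P, ((W a : ℂ) * ee (-(T a)))
        * (∑ n ∈ Finset.range N, (ee (θ a - θ astar)) ^ n) := by
      rw [hS]
      simp_rw [hexp]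
      rw [Finset.sum_comm]
      apply Finset.sum_congr rfl
      intro a _
      rw [Finset.mul_sum]
    have hsplit : S = ((W astar : ℂ) * ee (-(T astar))) * (N : ℂ)
        + ∑ a ∈ P.erase astar, ((W a : ℂ) * ee (-(T a)))
            * (∑ n ∈ Finset.range N, (ee (θ a - θ astar)) ^ n) := by
      rw [hS2, ← Finset.add_sum_erase _ _ hastarP]
      congr 2
      simp [ee_zero]
    have habsS_le : Complex.abs S ≤ (N : ℝ) * B ^ k := by
      rw [hS]
      refine le_trans (Complex.abs.sum_le _ _) ?_
      have hb : ∀ n ∈ Finset.range N,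
          Complex.abs (ψ n ^ k * ee (-((n : ℝ) * θ astar))) ≤ B ^ k := by
        intro n _
        rw [map_mul, ee_abs, mul_one, map_pow]
        exact pow_le_pow_left₀ (Complex.abs.nonneg _) (hψ n) k
      calc ∑ n ∈ Finset.range N, Complex.abs (ψ n ^ k * ee (-((n : ℝ) * θ astar)))
          ≤ (Finset.range N).card • (B ^ k) := Finset.sum_le_card_nsmul _ _ _ hb
        _ = (N : ℝ) * B ^ k := by rw [Finset.card_range, nsmul_eq_mul]
    have herr : Complex.abs (∑ a ∈ P.erase astar, ((W a : ℂ) * ee (-(T a)))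
        * (∑ n ∈ Finset.range N, (ee (θ a - θ astar)) ^ n)) ≤ E := by
      refine le_trans (Complex.abs.sum_le _ _) ?_
      rw [hE]
      apply Finset.sum_le_sum
      intro a ha
      obtain ⟨hane, haP⟩ := Finset.mem_erase.mp ha
      have hz1 : ee (θ a - θ astar) ≠ 1 := hz a haP hane
      have hdpos : 0 < Complex.abs (ee (θ a - θ astar) - 1) := by
        rw [AbsoluteValue.pos_iff]
        exact sub_ne_zero.mpr hz1
      have hgeom : Complex.abs (∑ n ∈ Finset.range N, (ee (θ a - θ astar)) ^ n)
          ≤ 2 / Complex.abs (ee (θ a - θ astar) - 1) := by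
        rw [geom_sum_eq hz1, map_div₀]
        have h2 : Complex.abs (ee (θ a - θ astar) ^ N - 1) ≤ 2 := by
          refine le_trans (cabs_sub_le _ _) ?_
          rw [map_pow, ee_abs, one_pow, map_one]
          norm_num
        gcongr
      rw [map_mul, map_mul, ee_abs, mul_one]
      have hWabs : Complex.abs (W a : ℂ) = (W a : ℝ) := Complex.abs_natCast _
      rw [hWabs]
      exact mul_le_mul_of_nonneg_left hgeom (Nat.cast_nonneg _)
    have h1 : (N : ℝ) * (W astar : ℝ)
        = Complex.abs (((W astar : ℂ) * ee (-(T astar))) * (N : ℂ)) := by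
      rw [map_mul, map_mul, ee_abs, mul_one, Complex.abs_natCast, Complex.abs_natCast]
      ring
    have h2 : ((W astar : ℂ) * ee (-(T astar))) * (N : ℂ)
        = S - ∑ a ∈ P.erase astar, ((W a : ℂ) * ee (-(T a)))
            * (∑ n ∈ Finset.range N, (ee (θ a - θ astar)) ^ n) := by
      rw [hsplit]; ring
    rw [h1, h2]
    exact le_trans (cabs_sub_le _ _) (add_le_add habsS_le herr)
  -- conclude
  have hWle : (W astar : ℝ) ≤ B ^ k := by
    by_contra hlt
    push_neg at hlt
    obtain ⟨N, hN⟩ := exists_nat_gt (E / ((W astar : ℝ) - B ^ k))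
    have hpos : (0 : ℝ) < (W astar : ℝ) - B ^ k := by linarith
    have hEN : E < (N : ℝ) * ((W astar : ℝ) - B ^ k) := by
      rw [div_lt_iff₀ hpos] at hN
      linarith
    have := main N
    nlinarith
  calc ((Nat.choose k (k/2) : ℝ)) ^ m = (W astar : ℝ) := by
        rw [hW, hastar]; push_cast; simp
  _ ≤ B ^ k := hWle

lemma abs_cos_add_int_mul_pi (x : ℝ) (p : ℤ) : |Real.cos (x + p * Real.pi)| = |Real.cos x| := by
  rw [Real.cos_add, Real.sin_int_mul_pi, mul_zero, sub_zero, abs_mul,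
    Real.abs_cos_int_mul_pi, mul_one]

set_option maxHeartbeats 1000000 in
lemma kronecker (m : ℕ) (hm : 1 ≤ m) (τ : Fin m → ℝ)
    (hInd : ∀ d : Fin m → ℤ, (∃ p : ℤ, ∑ j, (d j : ℝ) * τ j = (p : ℝ)) → ∀ j, d j = 0)
    (t : Fin m → ℝ) (ε : ℝ) (hε : 0 < ε) :
    ∃ n : ℕ, ∀ j, |(n : ℝ) * τ j - t j - round ((n : ℝ) * τ j - t j)| < ε := by
  -- reduce to ε' ≤ 1/2
  set ε' : ℝ := min ε 1 / 2 with hε'def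
  have hε'pos : 0 < ε' := by
    have := lt_min hε one_pos
    positivity
  have hε'le : ε' ≤ 1/2 := by
    have : min ε 1 ≤ 1 := min_le_right _ _
    rw [hε'def]; linarith
  have hε'lt : ε' < ε := by
    have : min ε 1 ≤ ε := min_le_left _ _
    rw [hε'def]; linarith
  set ρ : ℝ := Real.cos (Real.pi * ε') with hρdef
  have hρ0 : 0 ≤ ρ := by
    apply Real.cos_nonneg_of_mem_Icc
    constructor
    · nlinarith [Real.pi_pos, hε'pos]
    · nlinarith [Real.pi_pos]
  have hρ1 : ρ < 1 := by
    have := Real.cos_lt_cos_of_nonneg_of_le_pi (le_refl 0)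
      (show Real.pi * ε' ≤ Real.pi by nlinarith [Real.pi_pos])
      (by positivity)
    rw [Real.cos_zero] at this
    exact this
  set B : ℝ := 2 ^ m * ρ with hBdef
  have hB : 0 ≤ B := by positivity
  -- choose k with B ^ k < choose k (k/2) ^ m
  have hk : ∃ k : ℕ, ρ ^ k * ((k : ℝ) + 1) ^ m < 1 := by
    rcases eq_or_lt_of_le hρ0 with h0 | h0
    · exact ⟨1, by rw [← h0]; norm_num⟩
    · have htend := tendsto_pow_const_mul_const_pow_of_lt_one m hρ0 hρ1
      have hev : ∀ᶠ n : ℕ in Filter.atTop, (n : ℝ) ^ m * ρ ^ n < ρ :=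
        htend.eventually_lt_const h0
      obtain ⟨N, hN⟩ := Filter.eventually_atTop.mp hev
      set n := max N 1 with hn
      have h := hN n (le_max_left _ _)
      have hn1 : 1 ≤ n := le_max_right _ _
      refine ⟨n - 1, ?_⟩
      have hnn : n - 1 + 1 = n := by omega
      have hcast : ((n - 1 : ℕ) : ℝ) + 1 = (n : ℝ) := by
        rw [← hnn]; push_cast; ring
      rw [hcast]
      have hpow : ρ ^ n = ρ ^ (n - 1) * ρ := by rw [← pow_succ, hnn]
      rw [hpow] at h
      have hx : (0:ℝ) ≤ (n : ℝ) ^ m * ρ ^ (n-1) := by positivity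
      nlinarith [h]

  obtain ⟨k, hk⟩ := hk
  by_contra hcon
  push_neg at hcon
  -- every n has a bad coordinate, so |ψ n| ≤ B
  have hψ : ∀ n : ℕ, Complex.abs (∏ j, (1 + ee ((n : ℝ) * τ j - t j))) ≤ B := by
    intro n
    have hcon' : ∃ j, ε' ≤ |(n : ℝ) * τ j - t j - round ((n : ℝ) * τ j - t j)| := by
      obtain ⟨j, hj⟩ := hcon n
      exact ⟨j, le_trans hε'lt.le hj⟩
    obtain ⟨j₀, hj₀⟩ := hcon'
    rw [map_prod]
    rw [← Finset.mul_prod_erase Finset.univ _ (Finset.mem_univ j₀)]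
    set s : Fin m → ℝ := fun j => (n : ℝ) * τ j - t j with hs
    have hfact : Complex.abs (1 + ee (s j₀)) ≤ 2 * ρ := by
      rw [abs_one_add_ee]
      have hdecomp : Real.pi * s j₀ = Real.pi * (s j₀ - round (s j₀)) + (round (s j₀) : ℤ) * Real.pi := by
        ring
      rw [hdecomp, abs_cos_add_int_mul_pi]
      set u : ℝ := s j₀ - round (s j₀) with hu
      have hu2 : |u| ≤ 1/2 := abs_sub_round _
      have huε : ε' ≤ |u| := hj₀
      have habs : |Real.cos (Real.pi * u)| = Real.cos (Real.pi * |u|) := by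
        rcases abs_cases u with ⟨h1, _⟩ | ⟨h1, _⟩
        · rw [h1]
          refine _root_.abs_of_nonneg ?_
          apply Real.cos_nonneg_of_mem_Icc
          constructor <;> nlinarith [Real.pi_pos, abs_nonneg u, h1.symm.trans_le hu2]
        · rw [h1, mul_neg, Real.cos_neg]
          refine _root_.abs_of_nonneg ?_
          apply Real.cos_nonneg_of_mem_Icc
          constructor <;> nlinarith [Real.pi_pos, abs_nonneg u, h1.symm.trans_le hu2]
      rw [habs]
      have : Real.cos (Real.pi * |u|) ≤ ρ := by
        rw [hρdef]
        apply Real.cos_le_cos_of_nonneg_of_le_pi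
        · positivity
        · nlinarith [Real.pi_pos, abs_nonneg u]
        · nlinarith [Real.pi_pos]
      linarith
    have hrest : (∏ j ∈ Finset.univ.erase j₀, Complex.abs (1 + ee (s j))) ≤ 2 ^ (m - 1) := by
      calc (∏ j ∈ Finset.univ.erase j₀, Complex.abs (1 + ee (s j)))
          ≤ ∏ _j ∈ Finset.univ.erase j₀, (2 : ℝ) := by
            apply Finset.prod_le_prod
            · intro i _; exact Complex.abs.nonneg _
            · intro i _; exact abs_one_add_ee_le _
        _ = 2 ^ (m - 1) := by
            rw [Finset.prod_const, Finset.card_erase_of_mem (Finset.mem_univ j₀),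
              Finset.card_univ, Fintype.card_fin]
    calc Complex.abs (1 + ee (s j₀)) * ∏ j ∈ Finset.univ.erase j₀, Complex.abs (1 + ee (s j))
        ≤ (2 * ρ) * 2 ^ (m - 1) := by
          apply mul_le_mul hfact hrest (Finset.prod_nonneg fun i _ => Complex.abs.nonneg _)
            (by positivity)
      _ = B := by
          rw [hBdef]
          have : (2 : ℝ) ^ m = 2 * 2 ^ (m - 1) := by
            rw [← pow_succ']
            congr 1
            omega
          rw [this]
          ring
  have hkey := key_ineq m τ t hInd B hB hψ k
  -- contradiction with the choice of k
  have hC : (2 : ℝ) ^ k / ((k : ℝ) + 1) ≤ (Nat.choose k (k/2) : ℝ) := by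
    rw [div_le_iff₀ (by positivity)]
    have hn : (2 : ℕ) ^ k ≤ (k + 1) * Nat.choose k (k/2) := by
      calc (2 : ℕ) ^ k = ∑ i ∈ Finset.range (k + 1), Nat.choose k i :=
            (Nat.sum_range_choose k).symm
        _ ≤ ∑ _i ∈ Finset.range (k + 1), Nat.choose k (k/2) :=
            Finset.sum_le_sum fun i _ => Nat.choose_le_middle i k
        _ = (k + 1) * Nat.choose k (k/2) := by
            rw [Finset.sum_const, Finset.card_range, smul_eq_mul]
    have := (Nat.cast_le (α := ℝ)).mpr hn
    push_cast at this
    linarith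
  have hCm : ((2 : ℝ) ^ k / ((k : ℝ) + 1)) ^ m ≤ ((Nat.choose k (k/2) : ℝ)) ^ m :=
    pow_le_pow_left₀ (by positivity) hC m
  have hBk : B ^ k < ((2 : ℝ) ^ k / ((k : ℝ) + 1)) ^ m := by
    have h1 : B ^ k = 2 ^ (m * k) * ρ ^ k := by
      rw [hBdef, mul_pow, ← pow_mul]
    have h2 : ((2 : ℝ) ^ k / ((k : ℝ) + 1)) ^ m = 2 ^ (m * k) / ((k : ℝ) + 1) ^ m := by
      rw [div_pow, ← pow_mul, Nat.mul_comm]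
    rw [h1, h2]
    rw [lt_div_iff₀ (by positivity)]
    calc 2 ^ (m * k) * ρ ^ k * ((k : ℝ) + 1) ^ m
        = 2 ^ (m * k) * (ρ ^ k * ((k : ℝ) + 1) ^ m) := by ring
      _ < 2 ^ (m * k) * 1 := by
          apply mul_lt_mul_of_pos_left hk (by positivity)
      _ = 2 ^ (m * k) := by ring
  linarith

lemma abs_cos_sub_cos_le (a b : ℝ) : |Real.cos a - Real.cos b| ≤ |a - b| := by
  rw [Real.cos_sub_cos, abs_mul, abs_mul]
  calc |(-2 : ℝ)| * |Real.sin ((a+b)/2)| * |Real.sin ((a-b)/2)|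
      ≤ 2 * 1 * ((|a-b|)/2) := by
        have h1 : |Real.sin ((a-b)/2)| ≤ (|a-b|)/2 := by
          refine le_trans Real.abs_sin_le_abs ?_
          rw [abs_div, _root_.abs_two]
        apply mul_le_mul ?_ h1 (abs_nonneg _) (by norm_num)
        have := Real.abs_sin_le_one ((a+b)/2)
        rw [abs_neg, _root_.abs_two]
        nlinarith [abs_nonneg (Real.sin ((a+b)/2))]
    _ = |a - b| := by ring


/-- The closure of the value set of the trigonometric sum sequence equals the image of the
corresponding function on the unit cube, provided `1, τ_1, …, τ_m` are `ℚ`-linearly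
independent. -/
theorem stmt_4 (m r : ℕ) (hm : 1 ≤ m) (hr : 1 ≤ r)
    (τ : Fin m → ℝ)
    (hτ : ∀ (q₀ : ℚ) (q : Fin m → ℚ),
      (q₀ : ℝ) + ∑ j, (q j : ℝ) * τ j = 0 → q₀ = 0 ∧ ∀ j, q j = 0)
    (c : Fin r → Fin m → ℤ) (ξ φ : Fin r → ℝ)
    (v : ℕ → ℝ)
    (hv : ∀ n : ℕ,
      v n = ∑ i, ξ i * Real.cos (2 * π * n * (∑ j, (c i j : ℝ) * τ j) + φ i))
    (F : (Fin m → ℝ) → ℝ)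
    (hF : ∀ t : Fin m → ℝ,
      F t = ∑ i, ξ i * Real.cos (2 * π * (∑ j, (c i j : ℝ) * t j) + φ i)) :
    closure (Set.range v) = F '' (Set.univ.pi fun _ => Set.Icc (0 : ℝ) 1) := by
  have hInd : ∀ d : Fin m → ℤ, (∃ p : ℤ, ∑ j, (d j : ℝ) * τ j = (p : ℝ)) → ∀ j, d j = 0 := by
    rintro d ⟨p, hp⟩
    have h := hτ (-(p : ℚ)) (fun j => (d j : ℚ)) ?_
    · intro j
      have := h.2 j
      exact_mod_cast this
    · push_cast
      rw [hp]
      ring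
  have hFc : Continuous F := by
    have hFeq : F = fun t => ∑ i, ξ i * Real.cos (2 * π * (∑ j, (c i j : ℝ) * t j) + φ i) :=
      funext hF
    rw [hFeq]
    apply continuous_finset_sum
    intro i _
    refine continuous_const.mul (Real.continuous_cos.comp ?_)
    refine Continuous.add (continuous_const.mul (continuous_finset_sum _ fun j _ =>
      continuous_const.mul (continuous_apply j))) continuous_const
  have hcube : IsCompact (Set.univ.pi fun _ : Fin m => Set.Icc (0 : ℝ) 1) :=
    isCompact_univ_pi fun _ => isCompact_Icc
  apply Set.Subset.antisymm
  · -- closure (range v) ⊆ image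
    apply closure_minimal ?_ (hcube.image hFc).isClosed
    rintro x ⟨n, rfl⟩
    refine ⟨fun j => Int.fract ((n : ℝ) * τ j), ?_, ?_⟩
    · intro j _
      exact ⟨Int.fract_nonneg _, (Int.fract_lt_one _).le⟩
    · rw [hF, hv]
      apply Finset.sum_congr rfl
      intro i _
      congr 1
      set K : ℤ := ∑ j, c i j * ⌊(n : ℝ) * τ j⌋ with hK
      have hsum : ∑ j, (c i j : ℝ) * Int.fract ((n : ℝ) * τ j)
          = (n : ℝ) * (∑ j, (c i j : ℝ) * τ j) - (K : ℝ) := by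
        have hKr : (K : ℝ) = ∑ j, (c i j : ℝ) * (⌊(n : ℝ) * τ j⌋ : ℝ) := by
          rw [hK]; push_cast; rfl
        rw [hKr, Finset.mul_sum, ← Finset.sum_sub_distrib]
        apply Finset.sum_congr rfl
        intro j _
        rw [← Int.self_sub_floor]
        ring
      rw [hsum]
      have harg : 2 * π * ((n : ℝ) * (∑ j, (c i j : ℝ) * τ j) - (K : ℝ)) + φ i
          = (2 * π * (n : ℝ) * (∑ j, (c i j : ℝ) * τ j) + φ i) + (-K : ℤ) * (2 * π) := by
        push_cast; ring
      rw [harg, Real.cos_add_int_mul_two_pi]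
  · -- image ⊆ closure (range v)
    rintro y ⟨t, _, rfl⟩
    rw [Metric.mem_closure_iff]
    intro ε hε
    set M : ℝ := ∑ i, |ξ i| * ∑ j, |(c i j : ℝ)| with hM
    have hM0 : 0 ≤ M := by positivity
    set ε₀ : ℝ := ε / (2 * π * (M + 1)) with hε₀def
    have hε₀ : 0 < ε₀ := by
      rw [hε₀def]
      have := Real.pi_pos
      positivity
    obtain ⟨n, hn⟩ := kronecker m hm τ hInd t ε₀ hε₀
    refine ⟨v n, ⟨n, rfl⟩, ?_⟩
    rw [Real.dist_eq, hF, hv, ← Finset.sum_sub_distrib]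
    have hterm : ∀ i : Fin r,
        |ξ i * Real.cos (2 * π * (∑ j, (c i j : ℝ) * t j) + φ i)
          - ξ i * Real.cos (2 * π * (n : ℝ) * (∑ j, (c i j : ℝ) * τ j) + φ i)|
        ≤ |ξ i| * (2 * π * (∑ j, |(c i j : ℝ)|) * ε₀) := by
      intro i
      rw [← mul_sub, abs_mul]
      apply mul_le_mul_of_nonneg_left ?_ (abs_nonneg _)
      set p : Fin m → ℤ := fun j => round ((n : ℝ) * τ j - t j) with hp
      set u : Fin m → ℝ := fun j => (n : ℝ) * τ j - t j - p j with hu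
      have hun : ∀ j, |u j| < ε₀ := fun j => hn j
      set P : ℤ := ∑ j, c i j * p j with hP
      have hA : 2 * π * (n : ℝ) * (∑ j, (c i j : ℝ) * τ j) + φ i
          = (2 * π * (∑ j, (c i j : ℝ) * t j) + φ i + 2 * π * (∑ j, (c i j : ℝ) * u j))
            + P * (2 * π) := by
        have hPr : (P : ℝ) = ∑ j, (c i j : ℝ) * (p j : ℝ) := by
          rw [hP]; push_cast; rfl
        rw [hPr]
        have h1 : (n:ℝ) * ∑ j, (c i j : ℝ) * τ j
            = ∑ j, ((c i j : ℝ) * t j + (c i j : ℝ) * u j + (c i j : ℝ) * (p j : ℝ)) := by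
          rw [Finset.mul_sum]
          apply Finset.sum_congr rfl
          intro j _
          simp only [hu]
          ring
        rw [show 2 * π * (n:ℝ) * (∑ j, (c i j : ℝ) * τ j) + φ i
            = 2 * π * ((n:ℝ) * ∑ j, (c i j : ℝ) * τ j) + φ i by ring, h1,
          Finset.sum_add_distrib, Finset.sum_add_distrib]
        ring
      rw [hA, Real.cos_add_int_mul_two_pi]
      refine le_trans (_root_.abs_cos_sub_cos_le _ _) ?_
      have : 2 * π * (∑ j, (c i j : ℝ) * t j) + φ i
          - (2 * π * (∑ j, (c i j : ℝ) * t j) + φ i + 2 * π * (∑ j, (c i j : ℝ) * u j))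
          = -(2 * π * (∑ j, (c i j : ℝ) * u j)) := by ring
      rw [this, abs_neg]
      have hπ : (0:ℝ) < π := Real.pi_pos
      rw [abs_mul, _root_.abs_of_nonneg (by positivity : (0:ℝ) ≤ 2 * π)]
      rw [show 2 * π * (∑ j, |(c i j : ℝ)|) * ε₀ = 2 * π * ((∑ j, |(c i j : ℝ)|) * ε₀) by ring]
      apply mul_le_mul_of_nonneg_left ?_ (by positivity)
      refine le_trans (Finset.abs_sum_le_sum_abs _ _) ?_
      rw [Finset.sum_mul]
      apply Finset.sum_le_sum
      intro j _
      rw [abs_mul]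
      exact mul_le_mul_of_nonneg_left (hun j).le (abs_nonneg _)
    refine lt_of_le_of_lt (le_trans (Finset.abs_sum_le_sum_abs _ _)
      (Finset.sum_le_sum fun i _ => hterm i)) ?_
    have hsum : ∑ i, |ξ i| * (2 * π * (∑ j, |(c i j : ℝ)|) * ε₀) = 2 * π * ε₀ * M := by
      rw [hM, Finset.mul_sum]
      apply Finset.sum_congr rfl
      intro i _
      ring
    rw [hsum, hε₀def]
    have hπ : (0:ℝ) < π := Real.pi_pos
    rw [div_eq_mul_inv]
    have h2 : 2 * π * (ε * (2 * π * (M + 1))⁻¹) * M = ε * (M / (M + 1)) := by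
      field_simp
    rw [h2]
    have : M / (M + 1) < 1 := by
      rw [div_lt_one (by linarith)]
      linarith
    nlinarith
end

section
/- Let g ≥ 1 be an integer, let (w_n)_{n≥0} be a periodic real sequence with period g (i.e., w_{n+g} = w_n for all n ≥ 0), and let ρ > 0 be a real number. Define x_n = (ρ/2)(cos n + 1) and a_n = w_n + x_n for n ≥ 0. Then the closure of the value set {a_n : n ≥ 0} equals the union ⋃_{λ ∈ {w_0, ..., w_{g−1}}} [λ, λ + ρ]. -/
open Real Set

-- density of {g, 2π}-generated subgroup
lemma aux_dense_sub (g : ℕ) (hg : 1 ≤ g) :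
    Dense ((AddSubgroup.zmultiples (g : ℝ) ⊔ AddSubgroup.zmultiples (2 * π) : AddSubgroup ℝ) : Set ℝ) := by
  set S := AddSubgroup.zmultiples (g : ℝ) ⊔ AddSubgroup.zmultiples (2 * π) with hSdef
  rcases S.dense_or_cyclic with h | ⟨c, hc⟩
  · exact h
  · exfalso
    have hgS : (g : ℝ) ∈ S := SetLike.le_def.1 le_sup_left (AddSubgroup.mem_zmultiples _)
    have hpS : (2 * π : ℝ) ∈ S := SetLike.le_def.1 le_sup_right (AddSubgroup.mem_zmultiples _)
    rw [hc] at hgS hpS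
    obtain ⟨m, hm⟩ := AddSubgroup.mem_closure_singleton.1 hgS
    obtain ⟨n, hn⟩ := AddSubgroup.mem_closure_singleton.1 hpS
    rw [zsmul_eq_mul] at hm hn
    have hg0 : (0 : ℝ) < (g : ℝ) := by exact_mod_cast hg
    have hm0 : (m : ℝ) ≠ 0 := by
      rintro h
      rw [h, zero_mul] at hm
      exact absurd hm.symm (ne_of_gt hg0)
    have hπ : π = ((n * g : ℤ) : ℝ) / ((2 * m : ℤ) : ℝ) := by
      have h2m : ((2 * m : ℤ) : ℝ) ≠ 0 := by
        push_cast
        simpa using hm0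
      have key : (n : ℝ) * g = 2 * π * m := by
        calc (n : ℝ) * g = n * (m * c) := by rw [hm]
          _ = m * (n * c) := by ring
          _ = m * (2 * π) := by rw [hn]
          _ = 2 * π * m := by ring
      field_simp
      push_cast
      linarith [key]
    exact irrational_pi ⟨((n * g : ℤ) : ℚ) / ((2 * m : ℤ) : ℚ), by rw [hπ]; push_cast; ring⟩

lemma aux_dense_cos (g : ℕ) (hg : 1 ≤ g) (θ : ℝ) :
    Icc (-1 : ℝ) 1 ⊆ closure (Set.range fun m : ℕ => Real.cos (θ + m * g)) := by
  have hπ : (0 : ℝ) < 2 * π := by positivity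
  haveI : Fact ((0 : ℝ) < 2 * π) := ⟨hπ⟩
  haveI : CompactSpace Real.Angle := inferInstanceAs (CompactSpace (AddCircle (2 * π)))
  set S := AddSubgroup.zmultiples (g : ℝ) ⊔ AddSubgroup.zmultiples (2 * π) with hSdef
  have hS : Dense (S : Set ℝ) := aux_dense_sub g hg
  set u : Real.Angle := ((g : ℝ) : Real.Angle) with hu
  -- mk image of S = range of zsmul of u
  have hmksurj : Function.Surjective ((↑·) : ℝ → Real.Angle) := fun z => Quotient.exists_rep z
  have hmkcont : Continuous ((↑·) : ℝ → Real.Angle) := continuous_quotient_mk'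
  have himg : ((↑·) : ℝ → Real.Angle) '' (S : Set ℝ) = Set.range (fun m : ℤ => m • u) := by
    ext z
    constructor
    · rintro ⟨r, hr, rfl⟩
      obtain ⟨y, hy, zz, hz, rfl⟩ := AddSubgroup.mem_sup.1 hr
      obtain ⟨my, rfl⟩ := AddSubgroup.mem_zmultiples_iff.1 hy
      obtain ⟨mz, rfl⟩ := AddSubgroup.mem_zmultiples_iff.1 hz
      refine ⟨my, ?_⟩
      show my • u = ((my • (g : ℝ) + mz • (2 * π) : ℝ) : Real.Angle)
      have : ((my • (g : ℝ) + mz • (2 * π) : ℝ) : Real.Angle)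
          = my • u + mz • ((2 * π : ℝ) : Real.Angle) := by
        rfl
      rw [this, Real.Angle.coe_two_pi, smul_zero, add_zero]
    · rintro ⟨m, rfl⟩
      refine ⟨m • (g : ℝ), SetLike.le_def.1 le_sup_left (AddSubgroup.mem_zmultiples_iff.2 ⟨m, rfl⟩), ?_⟩
      rfl
  have hdz : Dense (Set.range (fun m : ℤ => m • u)) := by
    rw [← himg]
    exact hmksurj.denseRange.dense_image hmkcont hS
  have hdn : Dense (Set.range (fun m : ℕ => m • u)) := by
    rw [dense_iff_closure_eq, ← closure_range_zsmul_eq_nsmul, ← dense_iff_closure_eq]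
    exact hdz
  -- translate
  have hdt : Dense (Set.range (fun m : ℕ => (θ : Real.Angle) + m • u)) := by
    have := ((Homeomorph.addLeft (θ : Real.Angle)).surjective.denseRange.dense_image
      (Homeomorph.addLeft (θ : Real.Angle)).continuous hdn)
    rwa [← Set.range_comp] at this
  intro y hy
  obtain ⟨z, hz⟩ := Real.range_cos ▸ hy
  have hmem : (z : Real.Angle) ∈ closure (Set.range (fun m : ℕ => (θ : Real.Angle) + m • u)) :=
    hdt _
  have : Real.Angle.cos (z : Real.Angle) ∈
      closure (Real.Angle.cos '' Set.range (fun m : ℕ => (θ : Real.Angle) + m • u)) :=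
    image_closure_subset_closure_image Real.Angle.continuous_cos ⟨_, hmem, rfl⟩
  rw [Real.Angle.cos_coe, hz] at this
  refine closure_mono ?_ this
  rintro _ ⟨_, ⟨m, rfl⟩, rfl⟩
  refine ⟨m, ?_⟩
  show Real.cos (θ + m * g) = Real.Angle.cos ((θ : Real.Angle) + m • u)
  have : (θ : Real.Angle) + m • u = ((θ + m * g : ℝ) : Real.Angle) := by
    rw [hu, ← nsmul_eq_mul]
    rfl
  rw [this, Real.Angle.cos_coe]

lemma aux_periodic {g : ℕ} (w : ℕ → ℝ) (hw : ∀ n, w (n + g) = w n) (k m : ℕ) :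
    w (k + m * g) = w k := by
  induction m with
  | zero => simp
  | succ m ih => rw [Nat.succ_mul, ← add_assoc, hw, ih]

/-- Adding the dense oscillation `(ρ/2)(cos n + 1)` to a periodic sequence `w` produces a
sequence whose value set has closure the union of the intervals `[w k, w k + ρ]`. -/
theorem stmt_7 (g : ℕ) (hg : 1 ≤ g) (w : ℕ → ℝ) (hw : ∀ n, w (n + g) = w n)
    (ρ : ℝ) (hρ : 0 < ρ)
    (x a : ℕ → ℝ)
    (hx : ∀ n : ℕ, x n = ρ / 2 * (Real.cos n + 1))
    (ha : ∀ n : ℕ, a n = w n + x n) :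
    closure (Set.range a) = ⋃ k : Fin g, Set.Icc (w k) (w k + ρ) := by
  have hg0 : 0 < g := hg
  apply le_antisymm
  · -- closure (range a) ⊆ ⋃
    apply closure_minimal
    · rintro _ ⟨n, rfl⟩
      have hwn : w n = w (n % g) := by
        conv_lhs => rw [← Nat.mod_add_div' n g]
        exact aux_periodic w hw (n % g) (n / g)
      have hc1 : Real.cos n ≤ 1 := Real.cos_le_one _
      have hc2 : -1 ≤ Real.cos n := Real.neg_one_le_cos _
      refine Set.mem_iUnion.2 ⟨⟨n % g, Nat.mod_lt n hg0⟩, ?_⟩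
      simp only [ha, hx, hwn]
      constructor
      · nlinarith
      · nlinarith
    · exact isClosed_iUnion_of_finite fun k => isClosed_Icc
  · -- ⋃ ⊆ closure (range a)
    refine Set.iUnion_subset fun k => ?_
    rintro y ⟨hy1, hy2⟩
    set c : ℝ := 2 * (y - w k) / ρ - 1 with hc
    have hcmem : c ∈ Set.Icc (-1 : ℝ) 1 := by
      constructor
      · rw [hc]
        have : 0 ≤ 2 * (y - w k) / ρ := by
          apply div_nonneg _ hρ.le
          linarith
        linarith
      · rw [hc]
        have : 2 * (y - w k) / ρ ≤ 2 := by
          rw [div_le_iff₀ hρ]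
          linarith
        linarith
    have hcc := aux_dense_cos g hg (k : ℕ) hcmem
    -- f z = w k + ρ/2 * (z+1)
    set f : ℝ → ℝ := fun z => w k + ρ / 2 * (z + 1) with hf
    have hfc : Continuous f := by fun_prop
    have hyfc : y = f c := by
      rw [hf, hc]
      field_simp
      ring
    have : f c ∈ closure (f '' Set.range fun m : ℕ => Real.cos ((k : ℕ) + m * g)) :=
      image_closure_subset_closure_image hfc ⟨c, hcc, rfl⟩
    rw [← hyfc] at this
    refine closure_mono ?_ this
    rintro _ ⟨_, ⟨m, rfl⟩, rfl⟩
    refine ⟨(k : ℕ) + m * g, ?_⟩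
    rw [ha, hx, aux_periodic w hw (k : ℕ) m]
    push_cast
    ring
end
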